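/- Let Σ be a real symmetric positive definite 2n×2n matrix such that the complex Hermitian matrix Σ + (iℏ/2)J is positive semidefinite. Then det Σ = (ℏ/2)^{2n} if and only if the covariance ellipsoid Ω := {z ∈ ℝ^{2n} : Σ⁻¹z·z ≤ 2} is a quantum blob, equivalently if and only if Σ = (ℏ/2) S Sᵀ for some S ∈ Sp(n). (In terms of the Gaussian density operator with covariance matrix Σ, whose purity is (ℏ/2)ⁿ(det Σ)^{−1/2}, this says the state is pure exactly when Ω is a quantum blob.) -/

import Mathlib

/-!
The Robertson–Schrödinger condition `Σ + (iℏ/2)J ⪰ 0`, tested at the vectors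
`(ℏ/2)Σ⁻¹Jx + ix`, gives `Σ ⪰ (ℏ/2)² JᵀΣ⁻¹J`. Both sides are positive definite, and when
`det Σ = (ℏ/2)^{2n}` they have the same determinant; as the determinant is strictly monotone in
the Loewner order, they coincide, so `M = (2/ℏ)Σ` satisfies `MJM = J`. The positive square root
`S` of `M` is then symplectic, because `JᵀSJ` and `S⁻¹` are both positive square roots of `M⁻¹`,
and `Σ = (ℏ/2)SSᵀ`. Conversely symplectic matrices have determinant one. Finally `S(B(√ℏ))` is
the ellipsoid of `((ℏ/2)SSᵀ)⁻¹`, and a positive definite quadratic form is determined by its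
sublevel set.
-/

open Matrix Set ComplexOrder

noncomputable section

/-- The standard symplectic matrix `J = [[0, I],[-I, 0]]` on `ℝ²ⁿ = ℝⁿ ⊕ ℝⁿ`. -/
def J (n : ℕ) : Matrix (Fin n ⊕ Fin n) (Fin n ⊕ Fin n) ℝ :=
  Matrix.fromBlocks 0 1 (-1) 0

def IsSymplectic {n : ℕ} (S : Matrix (Fin n ⊕ Fin n) (Fin n ⊕ Fin n) ℝ) : Prop :=
  Sᵀ * J n * S = J n

/-- The closed ball `B²ⁿ(√ℏ) = {z : z·z ≤ ℏ}` of radius `√ℏ` centered at `0`. -/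
def ballh (n : ℕ) (ℏ : ℝ) : Set (Fin n ⊕ Fin n → ℝ) :=
  {z | z ⬝ᵥ z ≤ ℏ}

open scoped MatrixOrder

lemma eq_zero_of_prod_one_add_eq_one {ι : Type*} [Fintype ι] {f : ι → ℝ} (hf : 0 ≤ f)
    (h : ∏ i, (1 + f i) = 1) : f = 0 := by
  lift f to ι → NNReal using hf
  have h' : ∏ i, (1 + f i) = 1 := NNReal.coe_injective (by push_cast; exact h)
  have hf1 := (Fintype.prod_eq_one_iff_of_one_le (f := fun i => 1 + f i)
    fun i => le_self_add).mp h'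
  ext i
  simpa using congrFun hf1 i

namespace Matrix

variable {m : Type*} [Fintype m]

lemma le_of_setOf_mulVec_dotProduct_le_subset {A B : Matrix m m ℝ} (hA : A.PosDef)
    (hB : B.IsHermitian) {r : ℝ} (hr : 0 < r)
    (h : {z | A *ᵥ z ⬝ᵥ z ≤ r} ⊆ {z | B *ᵥ z ⬝ᵥ z ≤ r}) : B ≤ A := by
  refine le_iff.mpr (posSemidef_iff_dotProduct_mulVec.mpr ⟨hA.1.sub hB, fun z => ?_⟩)
  rw [star_trivial, sub_mulVec, dotProduct_sub, sub_nonneg, dotProduct_comm z, dotProduct_comm z]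
  rcases eq_or_ne z 0 with rfl | hz
  · simp
  have hAz : 0 < A *ᵥ z ⬝ᵥ z := by
    simpa [dotProduct_comm] using hA.dotProduct_mulVec_pos hz
  -- rescale `z` onto the boundary of the first ellipsoid
  set t := √(r / (A *ᵥ z ⬝ᵥ z))
  have ht : t ^ 2 * (A *ᵥ z ⬝ᵥ z) = r := by
    rw [Real.sq_sqrt (by positivity), div_mul_cancel₀ _ hAz.ne']
  have hquad (C : Matrix m m ℝ) : C *ᵥ (t • z) ⬝ᵥ t • z = t ^ 2 * (C *ᵥ z ⬝ᵥ z) := by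
    simp only [mulVec_smul, smul_dotProduct, dotProduct_smul, smul_eq_mul]; ring
  have hmem : B *ᵥ (t • z) ⬝ᵥ t • z ≤ r := h (by simp only [Set.mem_ofPred_eq, hquad, ht]; rfl)
  rw [hquad, ← ht] at hmem
  have ht0 : 0 < t ^ 2 := by
    have : 0 < t := Real.sqrt_pos.mpr (by positivity)
    positivity
  exact le_of_mul_le_mul_left hmem ht0

lemma eq_of_setOf_mulVec_dotProduct_le_eq {A B : Matrix m m ℝ} (hA : A.PosDef) (hB : B.PosDef)
    {r : ℝ} (hr : 0 < r) (h : {z | A *ᵥ z ⬝ᵥ z ≤ r} = {z | B *ᵥ z ⬝ᵥ z ≤ r}) : A = B :=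
  le_antisymm (le_of_setOf_mulVec_dotProduct_le_subset hB hA.1 hr h.ge)
    (le_of_setOf_mulVec_dotProduct_le_subset hA hB.1 hr h.le)

lemma re_star_dotProduct_ofReal_add_I_smul_mulVec (A B : Matrix m m ℝ) (c : ℝ) (a b : m → ℝ) :
    (star (fun i => (a i : ℂ) + Complex.I * b i) ⬝ᵥ
      ((A.map (Complex.ofReal ·) + (Complex.I * c) • B.map (Complex.ofReal ·)) *ᵥ
        fun i => (a i : ℂ) + Complex.I * b i)).re =
      a ⬝ᵥ A *ᵥ a + b ⬝ᵥ A *ᵥ b + c * (b ⬝ᵥ B *ᵥ a - a ⬝ᵥ B *ᵥ b) := by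
  simp only [dotProduct, mulVec, Pi.star_apply, add_apply, smul_apply, map_apply, smul_eq_mul,
    Finset.mul_sum, Complex.re_sum, ← Finset.sum_add_distrib, ← Finset.sum_sub_distrib]
  refine Finset.sum_congr rfl fun i _ => Finset.sum_congr rfl fun j _ => ?_
  simp only [Complex.star_def, map_add, map_mul, Complex.conj_ofReal, Complex.conj_I,
    Complex.mul_re, Complex.mul_im, Complex.add_re, Complex.add_im, Complex.neg_re,
    Complex.neg_im, Complex.I_re, Complex.I_im, Complex.ofReal_re, Complex.ofReal_im]
  ring

variable [DecidableEq m]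

lemma image_mulVec_setOf_dotProduct_self_le {S : Matrix m m ℝ} (hS : IsUnit S.det) (r : ℝ) :
    (S *ᵥ ·) '' {z | z ⬝ᵥ z ≤ r} = {z | (S * Sᵀ)⁻¹ *ᵥ z ⬝ᵥ z ≤ r} := by
  rw [Set.image_eq_preimage_of_inverse (g := (S⁻¹ *ᵥ ·))
    (fun z => by simp [mulVec_mulVec, nonsing_inv_mul _ hS])
    (fun z => by simp [mulVec_mulVec, mul_nonsing_inv _ hS])]
  ext z
  rw [Set.mem_preimage, Set.mem_ofPred_eq, Set.mem_ofPred_eq, mul_inv_rev, ← transpose_nonsing_inv,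
    ← mulVec_mulVec, mulVec_transpose, ← dotProduct_mulVec]

lemma PosDef.smul_transpose_mul_inv_mul_le {A B : Matrix m m ℝ} (hA : A.PosDef) (hB : Bᵀ = -B)
    {c : ℝ}
    (h : (A.map (Complex.ofReal ·) + (Complex.I * c) • B.map (Complex.ofReal ·)).PosSemidef) :
    c ^ 2 • (Bᵀ * A⁻¹ * B) ≤ A := by
  have hK : (c ^ 2 • (Bᵀ * A⁻¹ * B)).PosSemidef := by
    simpa [conjTranspose_eq_transpose_of_trivial] using
      (hA.inv.posSemidef.conjTranspose_mul_mul_same B).smul (sq_nonneg c)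
  refine le_iff.mpr (posSemidef_iff_dotProduct_mulVec.mpr ⟨hA.1.sub hK.1, fun x => ?_⟩)
  set w := B *ᵥ x
  set q := w ⬝ᵥ A⁻¹ *ᵥ w
  -- test the form of `A + i c B` at `c A⁻¹ B x + i x`
  have hx := h.re_dotProduct_nonneg fun i => ((c • A⁻¹ *ᵥ w) i : ℂ) + Complex.I * x i
  rw [RCLike.re_to_complex, re_star_dotProduct_ofReal_add_I_smul_mulVec] at hx
  have hAA : A *ᵥ (c • A⁻¹ *ᵥ w) = c • w := by
    rw [mulVec_smul, mulVec_mulVec, mul_nonsing_inv _ hA.det_pos.ne'.isUnit, one_mulVec]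
  have hskew (v : m → ℝ) : x ⬝ᵥ B *ᵥ v = -(w ⬝ᵥ v) := by
    rw [dotProduct_mulVec, ← mulVec_transpose, hB, neg_mulVec, neg_dotProduct]
  have e1 : (c • A⁻¹ *ᵥ w) ⬝ᵥ A *ᵥ (c • A⁻¹ *ᵥ w) = c ^ 2 * q := by
    rw [hAA, smul_dotProduct, dotProduct_smul, dotProduct_comm]; simp only [smul_eq_mul, q]; ring
  have e2 : (c • A⁻¹ *ᵥ w) ⬝ᵥ B *ᵥ x = c * q := by
    rw [smul_dotProduct, dotProduct_comm, smul_eq_mul]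
  have e3 : x ⬝ᵥ B *ᵥ (c • A⁻¹ *ᵥ w) = -(c * q) := by
    rw [hskew, dotProduct_smul, smul_eq_mul]
  have e4 : x ⬝ᵥ (c ^ 2 • (Bᵀ * A⁻¹ * B)) *ᵥ x = c ^ 2 * q := by
    rw [smul_mulVec, dotProduct_smul, ← mulVec_mulVec, ← mulVec_mulVec, dotProduct_mulVec,
      vecMul_transpose, smul_eq_mul]
  rw [star_trivial, sub_mulVec, dotProduct_sub, e4]
  rw [e1, e2, e3] at hx
  linarith

lemma IsHermitian.det_one_add {P : Matrix m m ℝ} (hP : P.IsHermitian) :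
    (1 + P).det = ∏ i, (1 + hP.eigenvalues i) := by
  have h : 1 + P = cfc (fun x : ℝ => 1 + x) P := by
    rw [cfc_const_add (1 : ℝ) (fun x => x) P, cfc_id' ℝ P, map_one]
  rw [h, hP.cfc_eq]
  simp [IsHermitian.cfc, -Unitary.conjStarAlgAut_apply]

lemma PosSemidef.eq_zero_of_det_one_add_eq_one {P : Matrix m m ℝ} (hP : P.PosSemidef)
    (h : (1 + P).det = 1) : P = 0 := by
  rw [hP.1.det_one_add] at h
  exact hP.1.eigenvalues_eq_zero_iff.mp <|
    eq_zero_of_prod_one_add_eq_one (fun i => hP.eigenvalues_nonneg i) h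

lemma PosDef.eq_of_le_of_det_eq {A B : Matrix m m ℝ} (hB : B.PosDef) (hle : B ≤ A)
    (hdet : A.det = B.det) : A = B := by
  -- conjugating by `B^{-1/2}` reduces to the case `B = 1`
  set R := CFC.sqrt B
  have hR : R.PosDef := IsStrictlyPositive.posDef (IsStrictlyPositive.sqrt B hB.isStrictlyPositive)
  have hRdet : IsUnit R.det := (isUnit_iff_isUnit_det R).mp hR.isUnit
  have hRi : IsUnit R⁻¹ := hR.inv.isUnit
  have hP : (R⁻¹ * (A - B) * R⁻¹).PosSemidef := by
    have := (IsUnit.posSemidef_star_right_conjugate_iff hRi).mpr (le_iff.mp hle)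
    rwa [show star R⁻¹ = R⁻¹ from hR.inv.1] at this
  have hRB : R⁻¹ * B * R⁻¹ = 1 := by
    rw [← CFC.sqrt_mul_sqrt_self B hB.posSemidef.nonneg, Matrix.mul_assoc, Matrix.mul_assoc,
      mul_nonsing_inv _ hRdet, Matrix.mul_one, nonsing_inv_mul _ hRdet]
  have hone : (1 + R⁻¹ * (A - B) * R⁻¹).det = 1 := by
    rw [Matrix.mul_sub, Matrix.sub_mul, hRB, add_sub_cancel, det_mul, det_mul, hdet, ← det_mul,
      ← det_mul, hRB, det_one]
  have h0 := hP.eq_zero_of_det_one_add_eq_one hone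
  rwa [hRi.mul_left_eq_zero, hRi.mul_right_eq_zero, sub_eq_zero] at h0

section Symplectic

variable {l : Type*} [Fintype l] [DecidableEq l]

lemma J_mul_J_transpose : J l ℝ * (J l ℝ)ᵀ = 1 := by
  rw [J_transpose, Matrix.mul_neg, J_squared, neg_neg]

lemma smul_inv_mem_symplecticGroup {Sig : Matrix (l ⊕ l) (l ⊕ l) ℝ} (hSig : Sig.PosDef) {c : ℝ}
    (hc : c ≠ 0) (h : c ^ 2 • ((J l ℝ)ᵀ * Sig⁻¹ * J l ℝ) = Sig) :
    c⁻¹ • Sig ∈ symplecticGroup l ℝ := by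
  have hSJS : Sig * J l ℝ * Sig = c ^ 2 • J l ℝ := by
    nth_rewrite 2 [← h]
    rw [Matrix.mul_smul]
    congr 1
    calc Sig * J l ℝ * ((J l ℝ)ᵀ * Sig⁻¹ * J l ℝ) = Sig * (J l ℝ * (J l ℝ)ᵀ) * Sig⁻¹ * J l ℝ := by
          simp only [Matrix.mul_assoc]
      _ = J l ℝ := by
          rw [J_mul_J_transpose, Matrix.mul_one, mul_nonsing_inv _ hSig.det_pos.ne'.isUnit,
            Matrix.one_mul]
  rw [SymplecticGroup.mem_iff, transpose_smul, (isHermitian_iff_isSymm.mp hSig.1).eq,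
    Matrix.smul_mul, Matrix.mul_smul, Matrix.smul_mul, hSJS, smul_smul, smul_smul]
  field_simp
  simp

lemma PosDef.sqrt_mem_symplecticGroup {M : Matrix (l ⊕ l) (l ⊕ l) ℝ} (hM : M.PosDef)
    (hMJ : M ∈ symplecticGroup l ℝ) : CFC.sqrt M ∈ symplecticGroup l ℝ := by
  set S := CFC.sqrt M
  have hS : S.PosDef := IsStrictlyPositive.posDef (IsStrictlyPositive.sqrt M hM.isStrictlyPositive)
  have hSS : S * S = M := CFC.sqrt_mul_sqrt_self M hM.posSemidef.nonneg
  have hMinv : M⁻¹ = (J l ℝ)ᵀ * M * J l ℝ := by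
    rw [SymplecticGroup.inv_eq_symplectic_inv M hMJ, J_transpose,
      (isHermitian_iff_isSymm.mp hM.1).eq]
  -- `Jᵀ S J` and `S⁻¹` are both positive square roots of `M⁻¹`
  have hconj : (J l ℝ)ᵀ * S * J l ℝ = S⁻¹ := by
    refine (CFC.sq_eq_sq_iff _ _ ?_ hS.inv.posSemidef.nonneg).mp ?_
    · simpa [conjTranspose_eq_transpose_of_trivial] using
        (hS.posSemidef.conjTranspose_mul_mul_same (J l ℝ)).nonneg
    · rw [sq, sq, ← mul_inv_rev, hSS, hMinv]
      calc (J l ℝ)ᵀ * S * J l ℝ * ((J l ℝ)ᵀ * S * J l ℝ)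
          = (J l ℝ)ᵀ * S * (J l ℝ * (J l ℝ)ᵀ) * S * J l ℝ := by noncomm_ring
        _ = (J l ℝ)ᵀ * M * J l ℝ := by rw [J_mul_J_transpose, Matrix.mul_one, ← hSS]; noncomm_ring
  rw [SymplecticGroup.mem_iff, (isHermitian_iff_isSymm.mp hS.1).eq]
  calc S * J l ℝ * S = J l ℝ * ((J l ℝ)ᵀ * S * J l ℝ) * S := by
        rw [← Matrix.mul_assoc, ← Matrix.mul_assoc, J_mul_J_transpose, Matrix.one_mul]
    _ = J l ℝ := by
        rw [hconj, Matrix.mul_assoc, nonsing_inv_mul _ hS.det_pos.ne'.isUnit, Matrix.mul_one]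

end Symplectic

end Matrix

lemma J_eq_neg (n : ℕ) : J n = -Matrix.J (Fin n) ℝ := by
  rw [_root_.J, Matrix.J, fromBlocks_neg, neg_neg, neg_zero]

lemma isSymplectic_iff_mem_symplecticGroup {n : ℕ} {S : Matrix (Fin n ⊕ Fin n) (Fin n ⊕ Fin n) ℝ} :
    IsSymplectic S ↔ S ∈ symplecticGroup (Fin n) ℝ := by
  rw [IsSymplectic, J_eq_neg, SymplecticGroup.mem_iff', Matrix.mul_neg, Matrix.neg_mul, neg_inj]

lemma isSymplectic_J (n : ℕ) : IsSymplectic (J n) := by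
  rw [isSymplectic_iff_mem_symplecticGroup, J_eq_neg]
  exact SymplecticGroup.neg_mem (SymplecticGroup.J_mem _ _)

namespace IsSymplectic

variable {n : ℕ} {S : Matrix (Fin n ⊕ Fin n) (Fin n ⊕ Fin n) ℝ}

lemma det_eq_one (hS : IsSymplectic S) : S.det = 1 :=
  SymplecticGroup.det_eq_one (isSymplectic_iff_mem_symplecticGroup.mp hS)

lemma isUnit (hS : IsSymplectic S) : IsUnit S :=
  (isUnit_iff_isUnit_det S).mpr (hS.det_eq_one ▸ isUnit_one)

lemma det_smul_mul_transpose (hS : IsSymplectic S) (c : ℝ) :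
    (c • (S * Sᵀ)).det = c ^ (2 * n) := by
  rw [det_smul, det_mul, det_transpose, hS.det_eq_one, Fintype.card_sum, Fintype.card_fin,
    two_mul, mul_one, mul_one]

lemma posDef_smul_mul_transpose (hS : IsSymplectic S) {c : ℝ} (hc : 0 < c) :
    (c • (S * Sᵀ)).PosDef :=
  (PosDef.mul_conjTranspose_self S (vecMul_injective_iff_isUnit.mpr hS.isUnit)).smul hc

lemma image_ballh (hS : IsSymplectic S) {ℏ : ℝ} (hℏ : 0 < ℏ) :
    (fun z => S *ᵥ z) '' ballh n ℏ = {z | ((ℏ / 2) • (S * Sᵀ))⁻¹ *ᵥ z ⬝ᵥ z ≤ 2} := by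
  have hSSt : IsUnit (S * Sᵀ).det := by
    rw [det_mul, det_transpose, hS.det_eq_one, mul_one]; exact isUnit_one
  have hinv : ((ℏ / 2) • (S * Sᵀ))⁻¹ = (2 / ℏ) • (S * Sᵀ)⁻¹ := by
    refine inv_eq_left_inv ?_
    rw [Matrix.smul_mul, Matrix.mul_smul, nonsing_inv_mul _ hSSt, smul_smul,
      div_mul_div_cancel₀' two_ne_zero, div_self hℏ.ne', one_smul]
  rw [ballh, image_mulVec_setOf_dotProduct_self_le ((isUnit_iff_isUnit_det S).mp hS.isUnit), hinv]
  ext z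
  rw [mem_ofPred_eq, mem_ofPred_eq, smul_mulVec, smul_dotProduct, smul_eq_mul, div_mul_eq_mul_div,
    div_le_iff₀ hℏ]
  constructor <;> intro h <;> linarith

end IsSymplectic

lemma exists_isSymplectic_of_det_eq {n : ℕ} {c : ℝ} (hc : 0 < c)
    {Sig : Matrix (Fin n ⊕ Fin n) (Fin n ⊕ Fin n) ℝ} (hSig : Sig.PosDef)
    (hquant :
      (Sig.map (Complex.ofReal ·) + (Complex.I * c) • (J n).map (Complex.ofReal ·)).PosSemidef)
    (hdet : Sig.det = c ^ (2 * n)) :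
    ∃ S, IsSymplectic S ∧ Sig = c • (S * Sᵀ) := by
  have hJ : (J n)ᵀ = -J n := by rw [J_eq_neg, transpose_neg, J_transpose]
  have hle := hSig.smul_transpose_mul_inv_mul_le hJ hquant
  have hK : (c ^ 2 • ((J n)ᵀ * Sig⁻¹ * J n)).PosDef := by
    have := hSig.inv.conjTranspose_mul_mul_same
      (mulVec_injective_iff_isUnit.mpr (isSymplectic_J n).isUnit)
    exact (by simpa [conjTranspose_eq_transpose_of_trivial] using this : PosDef _).smul
      (by positivity)
  have hdetK : (c ^ 2 • ((J n)ᵀ * Sig⁻¹ * J n)).det = Sig.det := by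
    rw [det_smul, det_mul, det_mul, det_transpose, (isSymplectic_J n).det_eq_one, det_nonsing_inv,
      Ring.inverse_eq_inv', hdet, Fintype.card_sum, Fintype.card_fin]
    field_simp
    ring
  have hfix : c ^ 2 • ((Matrix.J (Fin n) ℝ)ᵀ * Sig⁻¹ * Matrix.J (Fin n) ℝ) = Sig := by
    simpa [J_eq_neg] using (PosDef.eq_of_le_of_det_eq hK hle hdetK.symm).symm
  set M := c⁻¹ • Sig
  have hM : M.PosDef := hSig.smul (inv_pos.mpr hc)
  refine ⟨CFC.sqrt M, isSymplectic_iff_mem_symplecticGroup.mpr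
    (hM.sqrt_mem_symplecticGroup (smul_inv_mem_symplecticGroup hSig hc.ne' hfix)), ?_⟩
  rw [(isHermitian_iff_isSymm.mp (CFC.sqrt_nonneg M).posSemidef.1).eq,
    CFC.sqrt_mul_sqrt_self M hM.posSemidef.nonneg, smul_smul, mul_inv_cancel₀ hc.ne', one_smul]

/-- let `Σ` be a real symmetric positive definite `2n×2n` matrix with
`Σ + (iℏ/2)J` positive semidefinite. Then `det Σ = (ℏ/2)^{2n}` iff the covariance
ellipsoid `Ω = {z : Σ⁻¹z·z ≤ 2}` is a quantum blob, equivalently iff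
`Σ = (ℏ/2) S Sᵀ` for some `S ∈ Sp(n)` (purity of the corresponding Gaussian state). -/
theorem pure_gaussian_iff_covariance_ellipsoid_quantum_blob
    {n : ℕ} (ℏ : ℝ) (hℏ : 0 < ℏ)
    (Sig : Matrix (Fin n ⊕ Fin n) (Fin n ⊕ Fin n) ℝ) (hSig : Sig.PosDef)
    (hquant : (Sig.map (Complex.ofReal ·) + (Complex.I * (ℏ / 2 : ℝ)) •
        (J n).map (Complex.ofReal ·)).PosSemidef)
    (Ω : Set (Fin n ⊕ Fin n → ℝ)) (hΩ : Ω = {z | Sig⁻¹.mulVec z ⬝ᵥ z ≤ 2}) :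
    (Sig.det = (ℏ / 2) ^ (2 * n)
      ↔ ∃ S : Matrix (Fin n ⊕ Fin n) (Fin n ⊕ Fin n) ℝ,
          IsSymplectic S ∧ Ω = (fun z => S.mulVec z) '' ballh n ℏ)
    ∧ (Sig.det = (ℏ / 2) ^ (2 * n)
      ↔ ∃ S : Matrix (Fin n ⊕ Fin n) (Fin n ⊕ Fin n) ℝ,
          IsSymplectic S ∧ Sig = (ℏ / 2) • (S * Sᵀ)) := by
  have hpure : Sig.det = (ℏ / 2) ^ (2 * n) ↔
      ∃ S : Matrix (Fin n ⊕ Fin n) (Fin n ⊕ Fin n) ℝ, IsSymplectic S ∧ Sig = (ℏ / 2) • (S * Sᵀ) :=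
    ⟨exists_isSymplectic_of_det_eq (half_pos hℏ) hSig hquant,
      fun ⟨S, hS, hfac⟩ => hfac ▸ hS.det_smul_mul_transpose _⟩
  refine ⟨hpure.trans (exists_congr fun S => and_congr_right fun hS => ?_), hpure⟩
  rw [hΩ, hS.image_ballh hℏ]
  have hG := hS.posDef_smul_mul_transpose (half_pos hℏ)
  exact ⟨fun h => h ▸ rfl, fun h => inv_inj
    (eq_of_setOf_mulVec_dotProduct_le_eq hSig.inv hG.inv two_pos h) hSig.det_pos.ne'.isUnit⟩
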